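/- arXiv:2002.09553 — 2 statements merged into one kernel-verified Lean document; each statement's English description precedes it below -/
import Mathlib

section
/- In the channel model with Markov encoders, for every 1 ≤ t ≤ n and every y_{1:t} ∈ 𝒴^t with P(Y_{1:t} = y_{1:t}) > 0, define the joint posterior μ_{t-1}(w,u) := P(W = w, U_t = u | Y_{1:t-1} = y_{1:t-1}) (with μ_0(w,u) := 𝟙{u = u₁}/|𝒲|). Then μ_t(w,u') = [Σ_{u,z} μ_{t-1}(w,u) · Q^f(y_t | φ_t(w,u)) · Q^b(z | y_t) · 𝟙{u' = G²(u, φ_t, z, w)}] / [Σ_{w̃,u} μ_{t-1}(w̃,u) · Q^f(y_t | φ_t(w̃,u))]. In particular, the update of the joint posterior on (W, U_{t+1}) is a function only of μ_{t-1}, the current encoding function φ_t, and y_t (it is policy-independent in the sense that no other encoding functions enter). -/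
open scoped ENNReal Classical
open Finset

namespace NoisyFeedback

variable {W X Y Z U : Type*}

/-- Memory evolution: `mem G2 u1 φ w t zs` is the sender's memory after having
observed the feedback symbols `zs = z_{1:t}`. -/
def mem (G2 : U → (W × U → X) → Z → W → U) (u1 : U) (φ : ℕ → W × U → X) (w : W) :
    (t : ℕ) → (Fin t → Z) → U
  | 0, _ => u1
  | t + 1, zs => G2 (mem G2 u1 φ w t (Fin.init zs)) (φ t) (zs (Fin.last t)) w

variable [Fintype W] [Fintype X] [Fintype Y] [Fintype Z] [Fintype U]

/-- Joint pmf `P(W = w, Y_{1:t} = ys, Z_{1:t} = zs)` of the channel model with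
Markov encoders `φ`. -/
noncomputable def jointP (Qf : X → PMF Y) (Qb : Y → PMF Z)
    (G2 : U → (W × U → X) → Z → W → U) (u1 : U) (φ : ℕ → W × U → X)
    (t : ℕ) (w : W) (ys : Fin t → Y) (zs : Fin t → Z) : ℝ≥0∞ :=
  (Fintype.card W : ℝ≥0∞)⁻¹ *
    ∏ i : Fin t,
      Qf (φ i (w, mem G2 u1 φ w i (fun j => zs (Fin.castLE i.2.le j)))) (ys i) *
        Qb (ys i) (zs i)

/-- `P(Y_{1:t} = ys)`. -/
noncomputable def probY (Qf : X → PMF Y) (Qb : Y → PMF Z)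
    (G2 : U → (W × U → X) → Z → W → U) (u1 : U) (φ : ℕ → W × U → X)
    (t : ℕ) (ys : Fin t → Y) : ℝ≥0∞ :=
  ∑ w : W, ∑ zs : Fin t → Z, jointP Qf Qb G2 u1 φ t w ys zs

/-- `P(W = w, Y_{1:t} = ys)`. -/
noncomputable def probWY (Qf : X → PMF Y) (Qb : Y → PMF Z)
    (G2 : U → (W × U → X) → Z → W → U) (u1 : U) (φ : ℕ → W × U → X)
    (t : ℕ) (ys : Fin t → Y) (w : W) : ℝ≥0∞ :=
  ∑ zs : Fin t → Z, jointP Qf Qb G2 u1 φ t w ys zs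

/-- `P(W = w, Z_{1:t} = zs)`. -/
noncomputable def probWZ (Qf : X → PMF Y) (Qb : Y → PMF Z)
    (G2 : U → (W × U → X) → Z → W → U) (u1 : U) (φ : ℕ → W × U → X)
    (t : ℕ) (w : W) (zs : Fin t → Z) : ℝ≥0∞ :=
  ∑ ys : Fin t → Y, jointP Qf Qb G2 u1 φ t w ys zs

/-- `P(W = w, U_{t+1} = u, Y_{1:t} = ys)` (memory after `t` feedback symbols). -/
noncomputable def probWUY (Qf : X → PMF Y) (Qb : Y → PMF Z)
    (G2 : U → (W × U → X) → Z → W → U) (u1 : U) (φ : ℕ → W × U → X)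
    (t : ℕ) (ys : Fin t → Y) (w : W) (u : U) : ℝ≥0∞ :=
  ∑ zs : Fin t → Z,
    if mem G2 u1 φ w t zs = u then jointP Qf Qb G2 u1 φ t w ys zs else 0


/-!
Bayes' rule, one channel use at a time. Splitting off the last feedback symbol factors the joint
pmf of `(W, Y_{1:t+1}, Z_{1:t+1})` into that of `(W, Y_{1:t}, Z_{1:t})` times
`Q^f(y_{t+1} | φ_t(W, U_{t+1})) Q^b(z_{t+1} | y_{t+1})`, and `U_{t+2} = G²(U_{t+1}, φ_t, z_{t+1}, W)`.
Since these factors depend on the past only through `(W, U_{t+1})`, summing out the rest expresses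
both `P(W, U_{t+2}, Y_{1:t+1})` and `P(Y_{1:t+1})` through `P(W, U_{t+1}, Y_{1:t})`; dividing both by
`P(Y_{1:t})`, which is finite and at least `P(Y_{1:t+1}) > 0`, gives the update.
-/

lemma sum_fun_fin_succ {α M : Type*} [Fintype α] [AddCommMonoid M] (t : ℕ)
    (f : (Fin (t + 1) → α) → M) :
    ∑ zs, f zs = ∑ zs : Fin t → α, ∑ z, f (Fin.snoc zs z) := by
  rw [← (Fin.snocEquiv fun _ => α).sum_comp, Fintype.sum_prod_type, Finset.sum_comm]
  rfl

section Recursions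

variable (Qf : X → PMF Y) (Qb : Y → PMF Z)
    (G2 : U → (W × U → X) → Z → W → U) (u1 : U) (φ : ℕ → W × U → X)

omit [Fintype W] [Fintype X] [Fintype Y] [Fintype Z] [Fintype U] in
lemma mem_snoc (w : W) (t : ℕ) (zs : Fin t → Z) (z : Z) :
    mem G2 u1 φ w (t + 1) (Fin.snoc zs z) = G2 (mem G2 u1 φ w t zs) (φ t) z w := by
  simp [mem]

omit [Fintype X] [Fintype Y] [Fintype Z] [Fintype U] in
lemma jointP_succ (t : ℕ) (w : W) (ys : Fin (t + 1) → Y) (zs : Fin (t + 1) → Z) :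
    jointP Qf Qb G2 u1 φ (t + 1) w ys zs =
      jointP Qf Qb G2 u1 φ t w (Fin.init ys) (Fin.init zs) *
        (Qf (φ t (w, mem G2 u1 φ w t (Fin.init zs))) (ys (Fin.last t)) *
          Qb (ys (Fin.last t)) (zs (Fin.last t))) := by
  rw [jointP, jointP, Fin.prod_univ_castSucc, ← mul_assoc]
  rfl

omit [Fintype X] [Fintype Y] [Fintype Z] [Fintype U] in
lemma jointP_snoc (t : ℕ) (w : W) (ys : Fin (t + 1) → Y) (zs : Fin t → Z) (z : Z) :
    jointP Qf Qb G2 u1 φ (t + 1) w ys (Fin.snoc zs z) =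
      jointP Qf Qb G2 u1 φ t w (Fin.init ys) zs *
        (Qf (φ t (w, mem G2 u1 φ w t zs)) (ys (Fin.last t)) * Qb (ys (Fin.last t)) z) := by
  simpa using jointP_succ Qf Qb G2 u1 φ t w ys (Fin.snoc zs z)

omit [Fintype X] [Fintype Y] [Fintype Z] [Fintype U] in
lemma jointP_ne_top (t : ℕ) (w : W) (ys : Fin t → Y) (zs : Fin t → Z) :
    jointP Qf Qb G2 u1 φ t w ys zs ≠ ⊤ := by
  have : Nonempty W := ⟨w⟩
  refine ENNReal.mul_ne_top (ENNReal.inv_ne_top.2 (by simp)) (ENNReal.prod_ne_top fun i _ => ?_)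
  exact ENNReal.mul_ne_top (PMF.apply_ne_top _ _) (PMF.apply_ne_top _ _)

omit [Fintype X] [Fintype Y] [Fintype U] in
lemma probY_ne_top (t : ℕ) (ys : Fin t → Y) : probY Qf Qb G2 u1 φ t ys ≠ ⊤ :=
  ENNReal.sum_ne_top.2 fun w _ => ENNReal.sum_ne_top.2 fun zs _ =>
    jointP_ne_top Qf Qb G2 u1 φ t w ys zs

omit [Fintype X] [Fintype Y] in
lemma sum_probWUY_mul (t : ℕ) (ys : Fin t → Y) (w : W) (f : U → ℝ≥0∞) :
    ∑ u, probWUY Qf Qb G2 u1 φ t ys w u * f u =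
      ∑ zs, jointP Qf Qb G2 u1 φ t w ys zs * f (mem G2 u1 φ w t zs) := by
  simp only [probWUY, Finset.sum_mul, ite_mul, zero_mul]
  rw [Finset.sum_comm]
  simp

omit [Fintype X] [Fintype Y] in
lemma probWUY_succ (t : ℕ) (ys : Fin (t + 1) → Y) (w : W) (u' : U) :
    probWUY Qf Qb G2 u1 φ (t + 1) ys w u' =
      ∑ u, ∑ z,
        probWUY Qf Qb G2 u1 φ t (Fin.init ys) w u *
          Qf (φ t (w, u)) (ys (Fin.last t)) * Qb (ys (Fin.last t)) z *
          (if u' = G2 u (φ t) z w then 1 else 0) := by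
  simp only [mul_assoc, ← Finset.mul_sum]
  rw [sum_probWUY_mul, probWUY, sum_fun_fin_succ]
  refine Finset.sum_congr rfl fun zs _ => ?_
  simp only [Finset.mul_sum]
  refine Finset.sum_congr rfl fun z _ => ?_
  rw [mem_snoc, jointP_snoc]
  split_ifs <;> simp_all

omit [Fintype X] [Fintype Y] in
lemma probY_succ (t : ℕ) (ys : Fin (t + 1) → Y) :
    probY Qf Qb G2 u1 φ (t + 1) ys =
      ∑ w', ∑ u,
        probWUY Qf Qb G2 u1 φ t (Fin.init ys) w' u * Qf (φ t (w', u)) (ys (Fin.last t)) := by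
  have hQb : ∑ z, Qb (ys (Fin.last t)) z = 1 := by
    simpa [tsum_fintype] using (Qb (ys (Fin.last t))).tsum_coe
  refine Finset.sum_congr rfl fun w' _ => ?_
  rw [sum_probWUY_mul (f := fun u => Qf (φ t (w', u)) (ys (Fin.last t))),
    sum_fun_fin_succ]
  refine Finset.sum_congr rfl fun zs _ => ?_
  simp only [jointP_snoc, ← Finset.mul_sum, hQb, mul_one]

omit [Fintype X] [Fintype Y] in
lemma probY_succ_le (t : ℕ) (ys : Fin (t + 1) → Y) :
    probY Qf Qb G2 u1 φ (t + 1) ys ≤ probY Qf Qb G2 u1 φ t (Fin.init ys) := by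
  rw [probY_succ]
  refine Finset.sum_le_sum fun w' _ => ?_
  calc ∑ u, probWUY Qf Qb G2 u1 φ t (Fin.init ys) w' u * Qf (φ t (w', u)) (ys (Fin.last t))
      ≤ ∑ u, probWUY Qf Qb G2 u1 φ t (Fin.init ys) w' u * 1 := by
        gcongr
        exact PMF.coe_le_one _ _
    _ = ∑ zs, jointP Qf Qb G2 u1 φ t w' (Fin.init ys) zs := by
        simpa using sum_probWUY_mul Qf Qb G2 u1 φ t (Fin.init ys) w' 1

end Recursions

/-- Time is 0-based: `ys : Fin (t + 1) → Y` is `y_{1:t+1}`, and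
`probWUY … t (Fin.init ys) w u / probY … t (Fin.init ys)` is the posterior
`μ_t(w, u) = P(W = w, U_{t+1} = u | Y_{1:t} = y_{1:t})`. -/
theorem posterior_WU_update_general
    (Qf : X → PMF Y) (Qb : Y → PMF Z)
    (G2 : U → (W × U → X) → Z → W → U) (u1 : U) (φ : ℕ → W × U → X)
    (t : ℕ) (ys : Fin (t + 1) → Y)
    (hpos : 0 < probY Qf Qb G2 u1 φ (t + 1) ys)
    (w : W) (u' : U) :
    probWUY Qf Qb G2 u1 φ (t + 1) ys w u' / probY Qf Qb G2 u1 φ (t + 1) ys =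
      (∑ u : U, ∑ z : Z,
          (probWUY Qf Qb G2 u1 φ t (Fin.init ys) w u /
              probY Qf Qb G2 u1 φ t (Fin.init ys)) *
            Qf (φ t (w, u)) (ys (Fin.last t)) * Qb (ys (Fin.last t)) z *
            (if u' = G2 u (φ t) z w then 1 else 0)) /
        ∑ w' : W, ∑ u : U,
          (probWUY Qf Qb G2 u1 φ t (Fin.init ys) w' u /
              probY Qf Qb G2 u1 φ t (Fin.init ys)) *
            Qf (φ t (w', u)) (ys (Fin.last t)) := by
  set D := probY Qf Qb G2 u1 φ t (Fin.init ys)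
  have hD0 : D ≠ 0 := (hpos.trans_le (probY_succ_le Qf Qb G2 u1 φ t ys)).ne'
  have hDtop : D ≠ ⊤ := probY_ne_top Qf Qb G2 u1 φ t (Fin.init ys)
  have hnum : ∑ u, ∑ z, probWUY Qf Qb G2 u1 φ t (Fin.init ys) w u / D *
        Qf (φ t (w, u)) (ys (Fin.last t)) * Qb (ys (Fin.last t)) z *
        (if u' = G2 u (φ t) z w then 1 else 0) =
      probWUY Qf Qb G2 u1 φ (t + 1) ys w u' * D⁻¹ := by
    simp only [probWUY_succ, Finset.sum_mul, div_eq_mul_inv]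
    exact Finset.sum_congr rfl fun u _ => Finset.sum_congr rfl fun z _ => by ring
  have hden : ∑ w', ∑ u, probWUY Qf Qb G2 u1 φ t (Fin.init ys) w' u / D *
        Qf (φ t (w', u)) (ys (Fin.last t)) =
      probY Qf Qb G2 u1 φ (t + 1) ys * D⁻¹ := by
    simp only [probY_succ, Finset.sum_mul, div_eq_mul_inv]
    exact Finset.sum_congr rfl fun w' _ => Finset.sum_congr rfl fun u _ => by ring
  rw [hnum, hden,
    ENNReal.mul_div_mul_right _ _ (ENNReal.inv_ne_zero.2 hDtop) (ENNReal.inv_ne_top.2 hD0)]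

/-- **Policy-independent update of the joint posterior on `(W, U_{t+1})`** (Statement 2).
For `1 ≤ t ≤ n` (here `t+1 ≤ n` in 0-based indexing, `ys : Fin (t+1) → Y` is `y_{1:t+1}`),
if `P(Y_{1:t+1} = ys) > 0` then, writing `μ_{t}(w,u) = P(W = w, U_{t+1} = u | Y_{1:t})`,
the posterior `μ_{t+1}` is obtained from `μ_t`, the current encoding function `φ t`
and the new output `ys (last)` alone, by Bayes' rule. -/
theorem posterior_WU_update [Nonempty W] [Nonempty X] [Nonempty Y] [Nonempty Z] [Nonempty U]
    (Qf : X → PMF Y) (Qb : Y → PMF Z)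
    (G2 : U → (W × U → X) → Z → W → U) (u1 : U) (φ : ℕ → W × U → X)
    (n t : ℕ) (ht : t + 1 ≤ n) (ys : Fin (t + 1) → Y)
    (hpos : 0 < probY Qf Qb G2 u1 φ (t + 1) ys)
    (w : W) (u' : U) :
    probWUY Qf Qb G2 u1 φ (t + 1) ys w u' / probY Qf Qb G2 u1 φ (t + 1) ys =
      (∑ u : U, ∑ z : Z,
          (probWUY Qf Qb G2 u1 φ t (Fin.init ys) w u /
              probY Qf Qb G2 u1 φ t (Fin.init ys)) *
            Qf (φ t (w, u)) (ys (Fin.last t)) * Qb (ys (Fin.last t)) z *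
            (if u' = G2 u (φ t) z w then 1 else 0)) /
        ∑ w' : W, ∑ u : U,
          (probWUY Qf Qb G2 u1 φ t (Fin.init ys) w' u /
              probY Qf Qb G2 u1 φ t (Fin.init ys)) *
            Qf (φ t (w', u)) (ys (Fin.last t)) :=
  posterior_WU_update_general Qf Qb G2 u1 φ t ys hpos w u'

end NoisyFeedback
end

section
/- (Theorem 1.) In the channel model, define the dynamic-programming value functions: V_{n+1}(σ, u, w) := Σ_{(π,η)} σ(π,η) · (1 − max_{w̃} π(w̃)), and for t = n down to 1, V_t(σ, u, w) := min over φ ∈ (𝒲 × 𝒰 → 𝒳) of Σ_{y,z} Q^f(y | φ(w,u)) · Q^b(z | y) · V_{t+1}(G¹(σ, φ, z, u, w), G²(u, φ, z, w), w). Then for every history-dependent deterministic encoder ψ = (ψ_t)_{t=1}^n with ψ_t : 𝒲 × 𝒵^{t-1} → 𝒳, the error probability of the scheme (ψ, MAP decoder) satisfies P_e(ψ) ≥ (1/|𝒲|) Σ_w V_1(σ₀, u₁, w), where σ₀ is the point mass at (uniform on 𝒲, w ↦ point mass at u₁). Consequently, any encoder achieving (1/|𝒲|) Σ_w V_1(σ₀,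 u₁, w) — in particular one whose time-t encoding function attains, at every reachable sender belief state, the minimum in the recursion defining V_t — is optimal among all history-dependent encoders. -/
open scoped ENNReal Classical
open Finset

namespace NoisyFeedback

variable {W X Y Z U : Type*}

variable [Fintype W] [Fintype X] [Fintype Y] [Fintype Z] [Fintype U]

/-- Belief states of the receiver: a belief `π` on the message together with, for each
message `w`, a belief `η w` on the sender's memory. -/
@[reducible] def Belief (W U : Type*) : Type _ := (W → ℝ≥0∞) × (W → U → ℝ≥0∞)

/-- Update map `F¹` of the receiver's belief on the message. -/
noncomputable def F1 (Qf : X → PMF Y) (p : Belief W U) (φ : W × U → X) (y : Y) :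
    W → ℝ≥0∞ := fun w =>
  p.1 w * (∑ u : U, p.2 w u * Qf (φ (w, u)) y) /
    ∑ w' : W, p.1 w' * ∑ u : U, p.2 w' u * Qf (φ (w', u)) y

/-- Update map `F²` of the receiver's conditional belief on the sender's memory. -/
noncomputable def F2 (Qf : X → PMF Y) (Qb : Y → PMF Z)
    (G2 : U → (W × U → X) → Z → W → U) (p : Belief W U) (φ : W × U → X) (y : Y) :
    W → U → ℝ≥0∞ := fun w u' =>
  (∑ u : U, ∑ z : Z,
      p.2 w u * Qf (φ (w, u)) y * Qb y z * (if u' = G2 u φ z w then 1 else 0)) /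
    ∑ u : U, p.2 w u * Qf (φ (w, u)) y

/-- Combined belief update `F = (F¹, F²)`. -/
noncomputable def Fb (Qf : X → PMF Y) (Qb : Y → PMF Z)
    (G2 : U → (W × U → X) → Z → W → U) (p : Belief W U) (φ : W × U → X) (y : Y) :
    Belief W U :=
  (F1 Qf p φ y, F2 Qf Qb G2 p φ y)

/-- Sender belief update `G¹`: update of the sender's belief `σ` over receiver belief
states upon transmitting with encoding function `φ` (with memory `u`, message `w`)
and receiving feedback `z`. -/
noncomputable def G1 (Qf : X → PMF Y) (Qb : Y → PMF Z)
    (G2 : U → (W × U → X) → Z → W → U) (σ : Belief W U → ℝ≥0∞)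
    (φ : W × U → X) (z : Z) (u : U) (w : W) : Belief W U → ℝ≥0∞ := fun b =>
  (∑' p : Belief W U, σ p * ∑ y : Y,
      Qf (φ (w, u)) y * Qb y z * (if b = Fb Qf Qb G2 p φ y then 1 else 0)) /
    ∑ y : Y, Qf (φ (w, u)) y * Qb y z

/-- Initial belief state: uniform on the messages, point mass at `u1` on the memory. -/
noncomputable def b0 [Fintype W] (u1 : U) : Belief W U :=
  (fun _ => (Fintype.card W : ℝ≥0∞)⁻¹, fun _ u => if u = u1 then 1 else 0)

/-- Initial sender belief: point mass at the initial belief state `b0`. -/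
noncomputable def σ0 [Fintype W] (u1 : U) : Belief W U → ℝ≥0∞ := fun b =>
  if b = b0 u1 then 1 else 0

/-- The receiver belief process `(Π_t, H_t)` as a function of the channel outputs,
under the Markov encoders `φ`. -/
noncomputable def beliefs (Qf : X → PMF Y) (Qb : Y → PMF Z)
    (G2 : U → (W × U → X) → Z → W → U) (u1 : U) (φ : ℕ → W × U → X) :
    (t : ℕ) → (Fin t → Y) → Belief W U
  | 0, _ => b0 u1
  | t + 1, ys =>
      Fb Qf Qb G2 (beliefs Qf Qb G2 u1 φ t (Fin.init ys)) (φ t) (ys (Fin.last t))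

/-- Dynamic-programming value functions, indexed by the number `k` of remaining
transmissions: `Vk k = V_{n+1-k}` of the paper, so `Vk 0 = V_{n+1}` is the terminal
cost `Σ_{(π,η)} σ(π,η) (1 - max_w̃ π(w̃))`, and each step minimizes over the (finitely
many) encoding functions `φ : 𝒲 × 𝒰 → 𝒳`. -/
noncomputable def Vk (Qf : X → PMF Y) (Qb : Y → PMF Z)
    (G2 : U → (W × U → X) → Z → W → U) :
    ℕ → (Belief W U → ℝ≥0∞) → U → W → ℝ≥0∞
  | 0, σ, _, _ => ∑' p : Belief W U, σ p * (1 - univ.sup fun w' : W => p.1 w')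
  | k + 1, σ, u, w =>
      ⨅ φ : W × U → X,
        ∑ y : Y, ∑ z : Z,
          Qf (φ (w, u)) y * Qb y z *
            Vk Qf Qb G2 k (G1 Qf Qb G2 σ φ z u w) (G2 u φ z w) w

/-- Memory evolution under a history-dependent encoder `ψ`:
`U_{t+1} = G²(U_t, φ^{z_{1:t-1}}_t, Z_t, W)` where `φ^{z_{1:t-1}}_t (w', u') = ψ_t (w', z_{1:t-1})`. -/
def memψ (G2 : U → (W × U → X) → Z → W → U) (u1 : U)
    (ψ : (t : ℕ) → W → (Fin t → Z) → X) (w : W) :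
    (t : ℕ) → (Fin t → Z) → U
  | 0, _ => u1
  | t + 1, zs =>
      G2 (memψ G2 u1 ψ w t (Fin.init zs))
        (fun p : W × U => ψ t p.1 (Fin.init zs)) (zs (Fin.last t)) w

/-- Joint pmf `P(W = w, Y_{1:t} = ys, Z_{1:t} = zs)` of the channel model with a
history-dependent deterministic encoder `ψ` (so `X_t = ψ_t (W, Z_{1:t-1})`). -/
noncomputable def jointPψ (Qf : X → PMF Y) (Qb : Y → PMF Z)
    (ψ : (t : ℕ) → W → (Fin t → Z) → X)
    (t : ℕ) (w : W) (ys : Fin t → Y) (zs : Fin t → Z) : ℝ≥0∞ :=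
  (Fintype.card W : ℝ≥0∞)⁻¹ *
    ∏ i : Fin t,
      Qf (ψ i w (fun j => zs (Fin.castLE i.2.le j))) (ys i) * Qb (ys i) (zs i)

/-- `P(W = w, Z_{1:t} = zs)` under the encoder `ψ`. -/
noncomputable def probWZψ (Qf : X → PMF Y) (Qb : Y → PMF Z)
    (ψ : (t : ℕ) → W → (Fin t → Z) → X)
    (t : ℕ) (w : W) (zs : Fin t → Z) : ℝ≥0∞ :=
  ∑ ys : Fin t → Y, jointPψ Qf Qb ψ t w ys zs

/-- `P(W = w, Y_{1:t} = ys)` under the encoder `ψ`. -/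
noncomputable def probWYψ (Qf : X → PMF Y) (Qb : Y → PMF Z)
    (ψ : (t : ℕ) → W → (Fin t → Z) → X)
    (t : ℕ) (ys : Fin t → Y) (w : W) : ℝ≥0∞ :=
  ∑ zs : Fin t → Z, jointPψ Qf Qb ψ t w ys zs

end NoisyFeedback

/-!
Fix a history-dependent encoder `ψ`. At time `t` the sender knows `(W, Z_{1:t})`; record what it
knows about the receiver as the law of the receiver's belief `(Π_t, H_t)` (the Bayesian update of
its belief along `Y_{1:t}` with the encoding functions `φ_t = ψ_t(·, Z_{1:t-1})`) given `(W, Z_{1:t})`,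
weighted by `P(W, Z_{1:t})`. The encoding function `φ_t` is a competitor in the minimum defining
`V`, and `G¹` maps these weighted beliefs at time `t` to those at time `t + 1`; because `V` is
monotone and superhomogeneous in `σ`, the normalization in `G¹` can be dropped. Hence
`E[V_{k+1}(σ_t)] ≤ E[V_k(σ_{t+1})]`, and `(1/|𝒲|) Σ_w V_1(σ₀, u₁, w)` is bounded by the terminal cost
`E[1 - max_w Π_n(w)]`. Finally `Π_n`, restricted to the messages whose memory belief has not been
cleared, is the posterior of `W` given `(Y_{1:n}, Z_{1:n})`, so a decoder that sees `Y_{1:n}` only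
errs with probability at least that.
-/

theorem Fin.sum_univ_fun_snoc {α M : Type*} [Fintype α] [AddCommMonoid M] (t : ℕ)
    (F : (Fin (t + 1) → α) → M) :
    ∑ f, F f = ∑ g : Fin t → α, ∑ a, F (Fin.snoc g a) := by
  rw [← (Fin.snocEquiv fun _ => α).sum_comp, Fintype.sum_prod_type_right]
  rfl

theorem PMF.sum_coe {α : Type*} [Fintype α] (p : PMF α) : ∑ a, p a = 1 := by
  simpa using p.tsum_coe

namespace ENNReal

theorem tsum_sum_ite_eq_mul {ι β : Type*} [Fintype ι] [DecidableEq β] (c : ι → ℝ≥0∞)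
    (b : ι → β) (f : β → ℝ≥0∞) :
    ∑' x, (∑ i, c i * if x = b i then 1 else 0) * f x = ∑ i, c i * f (b i) := by
  simp_rw [Finset.sum_mul, mul_assoc, ite_mul, one_mul, zero_mul]
  rw [Summable.tsum_finsetSum fun i _ => ENNReal.summable]
  simp_rw [ENNReal.tsum_mul_left, tsum_ite_eq]

theorem mul_div_mul_div_self {a b D : ℝ≥0∞} (hab : a * b ≤ D) (hb : b ≠ ⊤) (hD : D ≠ ⊤) :
    D * (a * b / D * (b / b)) = a * b := by
  rcases eq_or_ne (a * b) 0 with h | h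
  · simp [h]
  have hD0 : D ≠ 0 := ((pos_iff_ne_zero.2 h).trans_le hab).ne'
  rw [ENNReal.div_self (right_ne_zero_of_mul h) hb, mul_one, ENNReal.mul_div_cancel hD0 hD]

theorem sum_mul_one_sub_le_sum_ite_ne {ι : Type*} [Fintype ι] [DecidableEq ι]
    (f : ι → ℝ≥0∞) (i₀ : ι) (s : ℝ≥0∞) (hfin : f i₀ ≠ ⊤) (h : f i₀ ≤ (∑ i, f i) * s) :
    (∑ i, f i) * (1 - s) ≤ ∑ i, if i₀ ≠ i then f i else 0 := by
  set R := ∑ i, if i₀ ≠ i then f i else 0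
  have hsplit : ∑ i, f i = R + f i₀ := by
    rw [← Fintype.sum_ite_eq i₀ f, ← Finset.sum_add_distrib]
    exact Finset.sum_congr rfl fun i _ => by by_cases hi : i₀ = i <;> simp [hi]
  rcases eq_or_ne R ⊤ with hR | hR
  · exact hR ▸ le_top
  have hS : ∑ i, f i ≠ ⊤ := hsplit ▸ ENNReal.add_ne_top.2 ⟨hR, hfin⟩
  calc (∑ i, f i) * (1 - s) = ∑ i, f i - (∑ i, f i) * s := by
        rw [ENNReal.mul_sub fun _ _ => hS, mul_one]
    _ ≤ ∑ i, f i - f i₀ := tsub_le_tsub_left h _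
    _ = R := by rw [hsplit, ENNReal.add_sub_cancel_right hfin]

end ENNReal

namespace NoisyFeedback

variable {W X Y Z U : Type*}
variable (Qf : X → PMF Y) (Qb : Y → PMF Z) (G2 : U → (W × U → X) → Z → W → U) (u1 : U)
  (ψ : (t : ℕ) → W → (Fin t → Z) → X)

theorem memψ_snoc (w : W) (t : ℕ) (zs : Fin t → Z) (z : Z) :
    memψ G2 u1 ψ w (t + 1) (Fin.snoc zs z) =
      G2 (memψ G2 u1 ψ w t zs) (fun q => ψ t q.1 zs) z w := by
  simp [memψ]

section Joint

variable [Fintype W]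

theorem jointPψ_snoc (t : ℕ) (w : W) (ys : Fin t → Y) (zs : Fin t → Z) (y : Y) (z : Z) :
    jointPψ Qf Qb ψ (t + 1) w (Fin.snoc ys y) (Fin.snoc zs z) =
      jointPψ Qf Qb ψ t w ys zs * (Qf (ψ t w zs) y * Qb y z) := by
  have hsnoc : ∀ m (h : m ≤ t + 1) (h' : m ≤ t) (j : Fin m),
      (Fin.snoc zs z : Fin (t + 1) → Z) (Fin.castLE h j) = zs (Fin.castLE h' j) :=
    fun m h h' j => Fin.snoc_castSucc (α := fun _ => Z) z zs (Fin.castLE h' j)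
  simp [jointPψ, Fin.prod_univ_castSucc, mul_assoc, hsnoc]

theorem jointPψ_le_inv_card (t : ℕ) (w : W) (ys : Fin t → Y) (zs : Fin t → Z) :
    jointPψ Qf Qb ψ t w ys zs ≤ (Fintype.card W : ℝ≥0∞)⁻¹ :=
  mul_le_of_le_one_right' (Finset.prod_le_one' fun _ _ =>
    mul_le_one' (PMF.coe_le_one _ _) (PMF.coe_le_one _ _))

end Joint

section BeliefUpdate

variable [Fintype U]

noncomputable def likelihood (p : Belief W U) (φ : W × U → X) (y : Y) (w : W) : ℝ≥0∞ :=
  ∑ u, p.2 w u * Qf (φ (w, u)) y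

/-- `F²` resets the mass of `η w` to `0` once `w` has become impossible (`0 / 0 = 0` in `ℝ≥0∞`),
so the posterior of the message is `π w` weighted by that mass. -/
noncomputable def posteriorWeight (p : Belief W U) (w : W) : ℝ≥0∞ :=
  p.1 w * ∑ u, p.2 w u

theorem likelihood_comp_fst (p : Belief W U) (x : W → X) (y : Y) (w : W) :
    likelihood Qf p (fun q => x q.1) y w = (∑ u, p.2 w u) * Qf (x w) y := by
  rw [likelihood, Finset.sum_mul]

variable [Fintype W] [Fintype Z]

theorem sum_Fb_fst_le_one (p : Belief W U) (φ : W × U → X) (y : Y) :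
    ∑ w, (Fb Qf Qb G2 p φ y).1 w ≤ 1 := by
  simp only [Fb, F1, div_eq_mul_inv, ← Finset.sum_mul]
  exact ENNReal.mul_inv_le_one _

theorem sum_Fb_snd (p : Belief W U) (φ : W × U → X) (y : Y) (w : W) :
    ∑ u', (Fb Qf Qb G2 p φ y).2 w u' = likelihood Qf p φ y w / likelihood Qf p φ y w := by
  simp only [Fb, F2, div_eq_mul_inv, ← Finset.sum_mul]
  congr 1
  rw [Finset.sum_comm]
  refine Finset.sum_congr rfl fun u _ => ?_
  simp [Finset.sum_comm (γ := U), ← Finset.mul_sum, PMF.sum_coe]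

theorem mul_posteriorWeight_Fb (p : Belief W U) (φ : W × U → X) (y : Y) (w : W)
    (hℓ : likelihood Qf p φ y w ≠ ⊤)
    (hD : ∑ w', p.1 w' * likelihood Qf p φ y w' ≠ ⊤) :
    (∑ w', p.1 w' * likelihood Qf p φ y w') * posteriorWeight (Fb Qf Qb G2 p φ y) w =
      p.1 w * likelihood Qf p φ y w := by
  have hF1 : (Fb Qf Qb G2 p φ y).1 w =
      p.1 w * likelihood Qf p φ y w / ∑ w', p.1 w' * likelihood Qf p φ y w' := rfl
  rw [posteriorWeight, hF1, sum_Fb_snd]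
  exact ENNReal.mul_div_mul_div_self
    (Finset.single_le_sum (f := fun w' => p.1 w' * likelihood Qf p φ y w')
      (fun _ _ => zero_le) (Finset.mem_univ w)) hℓ hD

theorem mul_posteriorWeight_Fb_comp_fst (p : Belief W U) (x : W → X) (y : Y) (w : W)
    (hm : ∑ u, p.2 w u ≤ 1) (ha : ∑ w', posteriorWeight p w' ≤ 1) :
    (∑ w', posteriorWeight p w' * Qf (x w') y) *
        posteriorWeight (Fb Qf Qb G2 p (fun q => x q.1) y) w =
      posteriorWeight p w * Qf (x w) y := by
  have hπℓ : ∀ w, p.1 w * likelihood Qf p (fun q => x q.1) y w =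
      posteriorWeight p w * Qf (x w) y :=
    fun w => by rw [likelihood_comp_fst, posteriorWeight, mul_assoc]
  have hD : ∑ w', posteriorWeight p w' * Qf (x w') y ≤ 1 :=
    (Finset.sum_le_sum fun w _ => mul_le_of_le_one_right' (PMF.coe_le_one _ _)).trans ha
  have hℓ : likelihood Qf p (fun q => x q.1) y w ≠ ⊤ := by
    rw [likelihood_comp_fst]
    exact ENNReal.mul_ne_top (ne_top_of_le_ne_top ENNReal.one_ne_top hm) (PMF.apply_ne_top _ _)
  simp only [← hπℓ] at hD ⊢
  exact mul_posteriorWeight_Fb Qf Qb G2 p _ y w hℓ (ne_top_of_le_ne_top ENNReal.one_ne_top hD)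

end BeliefUpdate

section ReceiverBelief

variable [Fintype W] [Fintype Z] [Fintype U]

/-- The receiver's belief along `(ys, zs)`, updated with the encoding functions
`φ_t^{z_{1:t-1}}` induced by `ψ`. -/
noncomputable def beliefsψ : (t : ℕ) → (Fin t → Y) → (Fin t → Z) → Belief W U
  | 0, _, _ => b0 u1
  | t + 1, ys, zs =>
      Fb Qf Qb G2 (beliefsψ t (Fin.init ys) (Fin.init zs))
        (fun q => ψ t q.1 (Fin.init zs)) (ys (Fin.last t))

theorem beliefsψ_snoc (t : ℕ) (ys : Fin t → Y) (zs : Fin t → Z) (y : Y) (z : Z) :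
    beliefsψ Qf Qb G2 u1 ψ (t + 1) (Fin.snoc ys y) (Fin.snoc zs z) =
      Fb Qf Qb G2 (beliefsψ Qf Qb G2 u1 ψ t ys zs) (fun q => ψ t q.1 zs) y := by
  simp [beliefsψ]

theorem sum_beliefsψ_snd_le_one (t : ℕ) (ys : Fin t → Y) (zs : Fin t → Z) (w : W) :
    ∑ u, (beliefsψ Qf Qb G2 u1 ψ t ys zs).2 w u ≤ 1 := by
  cases t with
  | zero => simp [beliefsψ, b0]
  | succ t =>
    rw [beliefsψ]
    exact (sum_Fb_snd Qf Qb G2 _ _ _ w).trans_le ENNReal.div_self_le_one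

theorem sum_posteriorWeight_beliefsψ_le_one (t : ℕ) (ys : Fin t → Y) (zs : Fin t → Z) :
    ∑ w, posteriorWeight (beliefsψ Qf Qb G2 u1 ψ t ys zs) w ≤ 1 := by
  cases t with
  | zero => simp [beliefsψ, b0, posteriorWeight]
  | succ t =>
    calc ∑ w, posteriorWeight (beliefsψ Qf Qb G2 u1 ψ (t + 1) ys zs) w
        ≤ ∑ w, (beliefsψ Qf Qb G2 u1 ψ (t + 1) ys zs).1 w :=
          Finset.sum_le_sum fun w _ =>
            mul_le_of_le_one_right' (sum_beliefsψ_snd_le_one Qf Qb G2 u1 ψ _ ys zs w)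
      _ ≤ 1 := by
          rw [beliefsψ]
          exact sum_Fb_fst_le_one Qf Qb G2 _ _ _

theorem jointPψ_eq_sum_mul_posteriorWeight (t : ℕ) (ys : Fin t → Y) (zs : Fin t → Z) (w : W) :
    jointPψ Qf Qb ψ t w ys zs =
      (∑ w', jointPψ Qf Qb ψ t w' ys zs) *
        posteriorWeight (beliefsψ Qf Qb G2 u1 ψ t ys zs) w := by
  induction t generalizing w with
  | zero =>
    have : Nonempty W := ⟨w⟩
    have hcard : (Fintype.card W : ℝ≥0∞) ≠ 0 := by exact_mod_cast Fintype.card_ne_zero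
    simp [jointPψ, beliefsψ, b0, posteriorWeight, ENNReal.mul_inv_cancel hcard]
  | succ t ih =>
    obtain ⟨ys, y, rfl⟩ : ∃ ys' y, ys = Fin.snoc ys' y :=
      ⟨Fin.init ys, ys (Fin.last t), (Fin.snoc_init_self ys).symm⟩
    obtain ⟨zs, z, rfl⟩ : ∃ zs' z, zs = Fin.snoc zs' z :=
      ⟨Fin.init zs, zs (Fin.last t), (Fin.snoc_init_self zs).symm⟩
    set p := beliefsψ Qf Qb G2 u1 ψ t ys zs
    set S := ∑ w', jointPψ Qf Qb ψ t w' ys zs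
    have hS : ∑ w', jointPψ Qf Qb ψ (t + 1) w' (Fin.snoc ys y) (Fin.snoc zs z) =
        S * Qb y z * ∑ w', posteriorWeight p w' * Qf (ψ t w' zs) y := by
      rw [Finset.mul_sum]
      refine Finset.sum_congr rfl fun w' _ => ?_
      rw [jointPψ_snoc, ih]
      ring
    rw [hS, beliefsψ_snoc, mul_assoc,
      mul_posteriorWeight_Fb_comp_fst Qf Qb G2 p (fun w => ψ t w zs) y w
        (sum_beliefsψ_snd_le_one Qf Qb G2 u1 ψ t ys zs w)
        (sum_posteriorWeight_beliefsψ_le_one Qf Qb G2 u1 ψ t ys zs),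
      jointPψ_snoc, ih]
    ring

theorem sum_jointPψ_mul_one_sub_sup_le (n : ℕ) (g : (Fin n → Y) → W) (ys : Fin n → Y)
    (zs : Fin n → Z) :
    ∑ w, jointPψ Qf Qb ψ n w ys zs *
        (1 - univ.sup fun w' => (beliefsψ Qf Qb G2 u1 ψ n ys zs).1 w') ≤
      ∑ w, if g ys ≠ w then jointPψ Qf Qb ψ n w ys zs else 0 := by
  have hcard : (Fintype.card W : ℝ≥0∞) ≠ 0 := by
    have : Nonempty W := ⟨g ys⟩
    exact_mod_cast Fintype.card_ne_zero
  rw [← Finset.sum_mul]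
  refine ENNReal.sum_mul_one_sub_le_sum_ite_ne _ (g ys) _
    (ne_top_of_le_ne_top (ENNReal.inv_ne_top.2 hcard) (jointPψ_le_inv_card Qf Qb ψ n _ ys zs)) ?_
  rw [jointPψ_eq_sum_mul_posteriorWeight Qf Qb G2 u1 ψ n ys zs (g ys)]
  gcongr
  exact (mul_le_of_le_one_right' (sum_beliefsψ_snd_le_one Qf Qb G2 u1 ψ n ys zs _)).trans
    (Finset.le_sup (f := fun w' => (beliefsψ Qf Qb G2 u1 ψ n ys zs).1 w') (Finset.mem_univ _))

end ReceiverBelief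

section SenderBelief

variable [Fintype W] [Fintype Y] [Fintype Z] [Fintype U]

/-- `P(W = w, Z_{1:t} = zs)` times the conditional law of the receiver's belief given
`(W, Z_{1:t}) = (w, zs)`; keeping the mass avoids dividing by `P(W = w, Z_{1:t} = zs)`. -/
noncomputable def senderBelief (t : ℕ) (w : W) (zs : Fin t → Z) : Belief W U → ℝ≥0∞ :=
  fun b => ∑ ys, jointPψ Qf Qb ψ t w ys zs * if b = beliefsψ Qf Qb G2 u1 ψ t ys zs then 1 else 0

theorem tsum_senderBelief_mul (t : ℕ) (w : W) (zs : Fin t → Z) (f : Belief W U → ℝ≥0∞) :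
    ∑' b, senderBelief Qf Qb G2 u1 ψ t w zs b * f b =
      ∑ ys, jointPψ Qf Qb ψ t w ys zs * f (beliefsψ Qf Qb G2 u1 ψ t ys zs) :=
  ENNReal.tsum_sum_ite_eq_mul (fun ys => jointPψ Qf Qb ψ t w ys zs)
    (beliefsψ Qf Qb G2 u1 ψ t · zs) f

theorem senderBelief_zero (w : W) (zs : Fin 0 → Z) (b : Belief W U) :
    senderBelief Qf Qb G2 u1 ψ 0 w zs b = (Fintype.card W : ℝ≥0∞)⁻¹ * σ0 u1 b := by
  by_cases hb : b = b0 u1 <;> simp [senderBelief, jointPψ, beliefsψ, σ0, hb]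

theorem mul_G1_senderBelief_le (t : ℕ) (w : W) (zs : Fin t → Z) (z : Z) (u : U)
    (b : Belief W U) :
    (∑ y, Qf (ψ t w zs) y * Qb y z) *
        G1 Qf Qb G2 (senderBelief Qf Qb G2 u1 ψ t w zs) (fun q => ψ t q.1 zs) z u w b ≤
      senderBelief Qf Qb G2 u1 ψ (t + 1) w (Fin.snoc zs z) b := by
  refine ENNReal.mul_div_le.trans_eq ?_
  rw [tsum_senderBelief_mul, senderBelief, Fin.sum_univ_fun_snoc]
  refine Finset.sum_congr rfl fun ys _ => ?_
  simp only [Finset.mul_sum, jointPψ_snoc, beliefsψ_snoc, mul_assoc]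

theorem mul_Vk_le {σ σ' : Belief W U → ℝ≥0∞} {c : ℝ≥0∞} (h : ∀ b, c * σ b ≤ σ' b)
    (k : ℕ) (u : U) (w : W) :
    c * Vk Qf Qb G2 k σ u w ≤ Vk Qf Qb G2 k σ' u w := by
  induction k generalizing σ σ' c u with
  | zero =>
    simp only [Vk]
    rw [← ENNReal.tsum_mul_left]
    exact ENNReal.tsum_le_tsum fun b => by rw [← mul_assoc]; gcongr; exact h b
  | succ k ih =>
    simp only [Vk]
    refine le_iInf fun φ => (mul_le_mul_right (iInf_le _ φ) c).trans ?_
    simp only [Finset.mul_sum]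
    refine Finset.sum_le_sum fun y _ => Finset.sum_le_sum fun z _ => ?_
    rw [mul_left_comm]
    refine mul_le_mul_right (ih (fun b => ?_) _) _
    simp only [G1, ← mul_div_assoc, ← ENNReal.tsum_mul_left, ← mul_assoc]
    gcongr with p
    exact h p

theorem Vk_succ_senderBelief_le (k t : ℕ) (w : W) (zs : Fin t → Z) :
    Vk Qf Qb G2 (k + 1) (senderBelief Qf Qb G2 u1 ψ t w zs) (memψ G2 u1 ψ w t zs) w ≤
      ∑ z, Vk Qf Qb G2 k (senderBelief Qf Qb G2 u1 ψ (t + 1) w (Fin.snoc zs z))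
        (memψ G2 u1 ψ w (t + 1) (Fin.snoc zs z)) w := by
  refine (iInf_le _ fun q => ψ t q.1 zs).trans ?_
  rw [Finset.sum_comm]
  refine Finset.sum_le_sum fun z _ => ?_
  rw [← Finset.sum_mul, memψ_snoc]
  exact mul_Vk_le Qf Qb G2 (mul_G1_senderBelief_le Qf Qb G2 u1 ψ t w zs z _) _ _ _

theorem sum_Vk_senderBelief_le (k t : ℕ) :
    ∑ w, ∑ zs : Fin t → Z,
        Vk Qf Qb G2 k (senderBelief Qf Qb G2 u1 ψ t w zs) (memψ G2 u1 ψ w t zs) w ≤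
      ∑ w, ∑ zs : Fin (k + t) → Z,
        Vk Qf Qb G2 0 (senderBelief Qf Qb G2 u1 ψ (k + t) w zs)
          (memψ G2 u1 ψ w (k + t) zs) w := by
  induction k generalizing t with
  | zero => rw [Nat.zero_add]
  | succ k ih =>
    calc _ ≤ ∑ w, ∑ zs : Fin (t + 1) → Z,
          Vk Qf Qb G2 k (senderBelief Qf Qb G2 u1 ψ (t + 1) w zs)
            (memψ G2 u1 ψ w (t + 1) zs) w := by
          simp only [Fin.sum_univ_fun_snoc (t := t)]
          exact Finset.sum_le_sum fun w _ => Finset.sum_le_sum fun zs _ =>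
            Vk_succ_senderBelief_le Qf Qb G2 u1 ψ k t w zs
      _ ≤ _ := by
          rw [Nat.add_right_comm]
          exact ih (t + 1)

theorem Vk_zero_senderBelief (t : ℕ) (w : W) (zs : Fin t → Z) (u : U) :
    Vk Qf Qb G2 0 (senderBelief Qf Qb G2 u1 ψ t w zs) u w =
      ∑ ys, jointPψ Qf Qb ψ t w ys zs *
        (1 - univ.sup fun w' => (beliefsψ Qf Qb G2 u1 ψ t ys zs).1 w') :=
  tsum_senderBelief_mul Qf Qb G2 u1 ψ t w zs _

theorem inv_card_mul_sum_Vk_le (n : ℕ) (g : (Fin n → Y) → W) :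
    (Fintype.card W : ℝ≥0∞)⁻¹ * (∑ w, Vk Qf Qb G2 n (σ0 u1) u1 w) ≤
      ∑ w, ∑ ys : Fin n → Y, ∑ zs : Fin n → Z,
        if g ys ≠ w then jointPψ Qf Qb ψ n w ys zs else 0 := by
  calc (Fintype.card W : ℝ≥0∞)⁻¹ * (∑ w, Vk Qf Qb G2 n (σ0 u1) u1 w)
      = ∑ w, ∑ zs : Fin 0 → Z,
          (Fintype.card W : ℝ≥0∞)⁻¹ * Vk Qf Qb G2 n (σ0 u1) (memψ G2 u1 ψ w 0 zs) w := by
        simp [Finset.mul_sum, memψ]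
    _ ≤ ∑ w, ∑ zs : Fin 0 → Z,
          Vk Qf Qb G2 n (senderBelief Qf Qb G2 u1 ψ 0 w zs) (memψ G2 u1 ψ w 0 zs) w := by
        gcongr with w _ zs
        exact mul_Vk_le Qf Qb G2 (fun b => (senderBelief_zero Qf Qb G2 u1 ψ w zs b).ge) ..
    _ ≤ ∑ w, ∑ zs : Fin n → Z, ∑ ys, jointPψ Qf Qb ψ n w ys zs *
          (1 - univ.sup fun w' => (beliefsψ Qf Qb G2 u1 ψ n ys zs).1 w') := by
        have h := sum_Vk_senderBelief_le Qf Qb G2 u1 ψ n 0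
        simp only [Vk_zero_senderBelief] at h
        exact h
    _ = ∑ ys, ∑ zs, ∑ w, jointPψ Qf Qb ψ n w ys zs *
          (1 - univ.sup fun w' => (beliefsψ Qf Qb G2 u1 ψ n ys zs).1 w') := by
        rw [Finset.sum_comm, Finset.sum_congr rfl fun _ _ => Finset.sum_comm, Finset.sum_comm]
    _ ≤ ∑ ys, ∑ zs, ∑ w, if g ys ≠ w then jointPψ Qf Qb ψ n w ys zs else 0 :=
        Finset.sum_le_sum fun ys _ => Finset.sum_le_sum fun zs _ =>
          sum_jointPψ_mul_one_sub_sup_le Qf Qb G2 u1 ψ n g ys zs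
    _ = _ := by
        conv_rhs => rw [Finset.sum_comm]
        exact Finset.sum_congr rfl fun _ _ => Finset.sum_comm

end SenderBelief

variable [Fintype W] [Fintype X] [Fintype Y] [Fintype Z] [Fintype U]

theorem dp_optimality_general (Qf : X → PMF Y) (Qb : Y → PMF Z)
    (G2 : U → (W × U → X) → Z → W → U) (u1 : U) (n : ℕ) :
    (∀ (ψ : (t : ℕ) → W → (Fin t → Z) → X) (gMAP : (Fin n → Y) → W),
      (∀ (ys : Fin n → Y) (w : W),
          probWYψ Qf Qb ψ n ys w ≤ probWYψ Qf Qb ψ n ys (gMAP ys)) →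
      (Fintype.card W : ℝ≥0∞)⁻¹ * (∑ w : W, Vk Qf Qb G2 n (σ0 u1) u1 w) ≤
        ∑ w : W, ∑ ys : Fin n → Y, ∑ zs : Fin n → Z,
          if gMAP ys ≠ w then jointPψ Qf Qb ψ n w ys zs else 0) ∧
    ∀ (ψstar : (t : ℕ) → W → (Fin t → Z) → X) (gstar : (Fin n → Y) → W),
      (∀ (ys : Fin n → Y) (w : W),
          probWYψ Qf Qb ψstar n ys w ≤ probWYψ Qf Qb ψstar n ys (gstar ys)) →
      (∑ w : W, ∑ ys : Fin n → Y, ∑ zs : Fin n → Z,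
          if gstar ys ≠ w then jointPψ Qf Qb ψstar n w ys zs else 0) =
        (Fintype.card W : ℝ≥0∞)⁻¹ * (∑ w : W, Vk Qf Qb G2 n (σ0 u1) u1 w) →
      ∀ (ψ : (t : ℕ) → W → (Fin t → Z) → X) (gMAP : (Fin n → Y) → W),
        (∀ (ys : Fin n → Y) (w : W),
            probWYψ Qf Qb ψ n ys w ≤ probWYψ Qf Qb ψ n ys (gMAP ys)) →
        (∑ w : W, ∑ ys : Fin n → Y, ∑ zs : Fin n → Z,
            if gstar ys ≠ w then jointPψ Qf Qb ψstar n w ys zs else 0) ≤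
          ∑ w : W, ∑ ys : Fin n → Y, ∑ zs : Fin n → Z,
            if gMAP ys ≠ w then jointPψ Qf Qb ψ n w ys zs else 0 :=
  ⟨fun ψ gMAP _ => inv_card_mul_sum_Vk_le Qf Qb G2 u1 ψ n gMAP,
    fun _ _ _ heq ψ gMAP _ => heq.trans_le (inv_card_mul_sum_Vk_le Qf Qb G2 u1 ψ n gMAP)⟩

/-- **Theorem 1: the dynamic program lower-bounds every history-dependent encoder, and
any encoder attaining the bound is optimal** (Statement 9).  For every history-dependent
deterministic encoder `ψ` with MAP decoding, `P_e(ψ) ≥ (1/|𝒲|) Σ_w V_1(σ₀, u₁, w)`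
(with `V_1 = Vk n`); consequently any encoder achieving this value is optimal among all
history-dependent encoders. -/
theorem dp_optimality [Nonempty W] [Nonempty X] [Nonempty Y] [Nonempty Z] [Nonempty U]
    (Qf : X → PMF Y) (Qb : Y → PMF Z)
    (G2 : U → (W × U → X) → Z → W → U) (u1 : U) (n : ℕ) :
    (∀ (ψ : (t : ℕ) → W → (Fin t → Z) → X) (gMAP : (Fin n → Y) → W),
      (∀ (ys : Fin n → Y) (w : W),
          probWYψ Qf Qb ψ n ys w ≤ probWYψ Qf Qb ψ n ys (gMAP ys)) →
      (Fintype.card W : ℝ≥0∞)⁻¹ * (∑ w : W, Vk Qf Qb G2 n (σ0 u1) u1 w) ≤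
        ∑ w : W, ∑ ys : Fin n → Y, ∑ zs : Fin n → Z,
          if gMAP ys ≠ w then jointPψ Qf Qb ψ n w ys zs else 0) ∧
    ∀ (ψstar : (t : ℕ) → W → (Fin t → Z) → X) (gstar : (Fin n → Y) → W),
      (∀ (ys : Fin n → Y) (w : W),
          probWYψ Qf Qb ψstar n ys w ≤ probWYψ Qf Qb ψstar n ys (gstar ys)) →
      (∑ w : W, ∑ ys : Fin n → Y, ∑ zs : Fin n → Z,
          if gstar ys ≠ w then jointPψ Qf Qb ψstar n w ys zs else 0) =
        (Fintype.card W : ℝ≥0∞)⁻¹ * (∑ w : W, Vk Qf Qb G2 n (σ0 u1) u1 w) →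
      ∀ (ψ : (t : ℕ) → W → (Fin t → Z) → X) (gMAP : (Fin n → Y) → W),
        (∀ (ys : Fin n → Y) (w : W),
            probWYψ Qf Qb ψ n ys w ≤ probWYψ Qf Qb ψ n ys (gMAP ys)) →
        (∑ w : W, ∑ ys : Fin n → Y, ∑ zs : Fin n → Z,
            if gstar ys ≠ w then jointPψ Qf Qb ψstar n w ys zs else 0) ≤
          ∑ w : W, ∑ ys : Fin n → Y, ∑ zs : Fin n → Z,
            if gMAP ys ≠ w then jointPψ Qf Qb ψ n w ys zs else 0 :=
  dp_optimality_general Qf Qb G2 u1 n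

end NoisyFeedback
end
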